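/- Let X be a real Banach space and let Y = Y₁ ⊕_a Y₂ be the absolute sum of real Banach spaces Y₁ and Y₂ with respect to an absolute norm N (so Y₁ is an absolute summand of Y). If the set of norm attaining compact operators NA(X, Y₁ ⊕_a Y₂) ∩ K(X, Y₁ ⊕_a Y₂) is dense in the space K(X, Y₁ ⊕_a Y₂) of compact bounded linear operators, then NA(X, Y₁) ∩ K(X, Y₁) is dense in K(X, Y₁). -/

import Mathlib

open Filter Topology

/-- `N` is an absolute norm on `ℝ²`: a norm with `N(1,0)=N(0,1)=1` and
`N(s,t)=N(|s|,|t|)`. -/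
structure IsAbsoluteNorm (N : ℝ → ℝ → ℝ) : Prop where
  nonneg : ∀ s t : ℝ, 0 ≤ N s t
  eq_zero_iff : ∀ s t : ℝ, N s t = 0 ↔ s = 0 ∧ t = 0
  triangle : ∀ s₁ t₁ s₂ t₂ : ℝ, N (s₁ + s₂) (t₁ + t₂) ≤ N s₁ t₁ + N s₂ t₂
  smul : ∀ c s t : ℝ, N (c * s) (c * t) = |c| * N s t
  one_zero : N 1 0 = 1
  zero_one : N 0 1 = 1
  abs_eq : ∀ s t : ℝ, N s t = N |s| |t|

/-- The set of norm attaining bounded linear operators from `X` to `Y`. -/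
def NA (X Y : Type*) [NormedAddCommGroup X] [NormedSpace ℝ X]
    [NormedAddCommGroup Y] [NormedSpace ℝ Y] : Set (X →L[ℝ] Y) :=
  {T | ∃ x₀ : X, ‖x₀‖ = 1 ∧ ‖T x₀‖ = ‖T‖}

/-!
Approximate `w ↦ e⁻¹ (T w, 0)` by a compact operator `S` attaining its norm at `x₀`, let `g` be
a norming functional of `S x₀` and `u` the unit vector along the first coordinate of `S x₀`.
With `α = g (e⁻¹ (u, 0))`, the map `P y = (e y).1 + α⁻¹ g (e⁻¹ (0, (e y).2)) u` (`twistedFst`)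
is a left inverse of `w ↦ e⁻¹ (w, 0)` of norm at most `α⁻¹`, because testing `g` on
`e⁻¹ (‖y₁‖ u, ± y₂)` gives `α ‖y₁‖ + |g (e⁻¹ (0, y₂))| ≤ N ‖y₁‖ ‖y₂‖`; and `‖P (S x₀)‖ = α⁻¹ ‖S‖`.
So `P ∘ S` is compact, attains its norm at `x₀`, and is within `α⁻¹ ‖S - e⁻¹ (T, 0)‖` of `T`.
Once `‖S - e⁻¹ (T, 0)‖ < ‖T‖ / 4`, comparing `g (S x₀) = ‖S‖` with its two components gives
`α > 2 / 3`; operators of small norm are approximated by `0`.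
-/

namespace IsAbsoluteNorm

variable {N : ℝ → ℝ → ℝ}

theorem apply_zero_right (hN : IsAbsoluteNorm N) (s : ℝ) : N s 0 = |s| := by
  simpa [hN.one_zero] using hN.smul s 1 0

theorem apply_zero_left (hN : IsAbsoluteNorm N) (t : ℝ) : N 0 t = |t| := by
  simpa [hN.zero_one] using hN.smul t 0 1

theorem apply_neg_right (hN : IsAbsoluteNorm N) (s t : ℝ) : N s (-t) = N s t := by
  rw [hN.abs_eq, abs_neg, ← hN.abs_eq]

theorem apply_neg_left (hN : IsAbsoluteNorm N) (s t : ℝ) : N (-s) t = N s t := by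
  rw [hN.abs_eq, abs_neg, ← hN.abs_eq]

theorem abs_le_left (hN : IsAbsoluteNorm N) (s t : ℝ) : |s| ≤ N s t := by
  have h := hN.triangle s t s (-t)
  rw [add_neg_cancel, hN.apply_zero_right, hN.apply_neg_right, ← two_mul, abs_mul, abs_two] at h
  linarith

theorem abs_le_right (hN : IsAbsoluteNorm N) (s t : ℝ) : |t| ≤ N s t := by
  have h := hN.triangle s t (-s) t
  rw [add_neg_cancel, hN.apply_zero_left, hN.apply_neg_left, ← two_mul, abs_mul, abs_two] at h
  linarith

theorem le_abs_add_abs (hN : IsAbsoluteNorm N) (s t : ℝ) : N s t ≤ |s| + |t| := by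
  simpa [hN.apply_zero_right, hN.apply_zero_left] using hN.triangle s 0 0 t

end IsAbsoluteNorm

theorem ContinuousLinearMap.comp_mem_NA {X Y Z : Type*}
    [NormedAddCommGroup X] [NormedSpace ℝ X] [NormedAddCommGroup Y] [NormedSpace ℝ Y]
    [NormedAddCommGroup Z] [NormedSpace ℝ Z] {S : X →L[ℝ] Y} {x₀ : X} (hx₀ : ‖x₀‖ = 1)
    (hSx₀ : ‖S x₀‖ = ‖S‖) {P : Y →L[ℝ] Z} {c : ℝ} (hP : ‖P‖ ≤ c)
    (hPSx₀ : ‖P (S x₀)‖ = c * ‖S x₀‖) : P ∘L S ∈ NA X Z := by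
  refine ⟨x₀, hx₀, le_antisymm ((P ∘L S).le_opNorm_of_le hx₀.le |>.trans_eq (mul_one _)) ?_⟩
  calc ‖P ∘L S‖ ≤ ‖P‖ * ‖S‖ := P.opNorm_comp_le S
    _ ≤ c * ‖S‖ := by gcongr
    _ = ‖(P ∘L S) x₀‖ := by rw [comp_apply, hPSx₀, hSx₀]

namespace AbsoluteSum

open ContinuousLinearMap

variable {Y Y₁ Y₂ : Type*} [NormedAddCommGroup Y] [NormedSpace ℝ Y]
  [NormedAddCommGroup Y₁] [NormedSpace ℝ Y₁] [NormedAddCommGroup Y₂] [NormedSpace ℝ Y₂]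
  {N : ℝ → ℝ → ℝ} {e : Y ≃L[ℝ] Y₁ × Y₂}

theorem norm_symm_apply (he : ∀ y : Y, ‖y‖ = N ‖(e y).1‖ ‖(e y).2‖) (w : Y₁) (z : Y₂) :
    ‖e.symm (w, z)‖ = N ‖w‖ ‖z‖ := by
  simpa using he (e.symm (w, z))

theorem norm_symm_inl (hN : IsAbsoluteNorm N) (he : ∀ y : Y, ‖y‖ = N ‖(e y).1‖ ‖(e y).2‖)
    (w : Y₁) : ‖e.symm (w, 0)‖ = ‖w‖ := by
  rw [norm_symm_apply he, norm_zero, hN.apply_zero_right, abs_norm]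

theorem norm_symm_inr (hN : IsAbsoluteNorm N) (he : ∀ y : Y, ‖y‖ = N ‖(e y).1‖ ‖(e y).2‖)
    (z : Y₂) : ‖e.symm (0, z)‖ = ‖z‖ := by
  rw [norm_symm_apply he, norm_zero, hN.apply_zero_left, abs_norm]

theorem norm_fst_le (hN : IsAbsoluteNorm N) (he : ∀ y : Y, ‖y‖ = N ‖(e y).1‖ ‖(e y).2‖)
    (y : Y) : ‖(e y).1‖ ≤ ‖y‖ := by
  simpa [he y] using hN.abs_le_left ‖(e y).1‖ ‖(e y).2‖

theorem norm_snd_le (hN : IsAbsoluteNorm N) (he : ∀ y : Y, ‖y‖ = N ‖(e y).1‖ ‖(e y).2‖)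
    (y : Y) : ‖(e y).2‖ ≤ ‖y‖ := by
  simpa [he y] using hN.abs_le_right ‖(e y).1‖ ‖(e y).2‖

theorem norm_le_norm_fst_add_norm_snd (hN : IsAbsoluteNorm N)
    (he : ∀ y : Y, ‖y‖ = N ‖(e y).1‖ ‖(e y).2‖) (y : Y) : ‖y‖ ≤ ‖(e y).1‖ + ‖(e y).2‖ := by
  simpa [← he y] using hN.le_abs_add_abs ‖(e y).1‖ ‖(e y).2‖

theorem norm_comp_symm_inl (hN : IsAbsoluteNorm N) (he : ∀ y : Y, ‖y‖ = N ‖(e y).1‖ ‖(e y).2‖)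
    {X : Type*} [NormedAddCommGroup X] [NormedSpace ℝ X] (T : X →L[ℝ] Y₁) :
    ‖(e.symm : Y₁ × Y₂ →L[ℝ] Y) ∘L inl ℝ Y₁ Y₂ ∘L T‖ = ‖T‖ := by
  refine le_antisymm (opNorm_le_bound _ (norm_nonneg _) fun x => ?_)
    (opNorm_le_bound _ (norm_nonneg _) fun x => ?_)
  · simpa [norm_symm_inl hN he] using T.le_opNorm x
  · simpa [norm_symm_inl hN he] using
      ((e.symm : Y₁ × Y₂ →L[ℝ] Y) ∘L inl ℝ Y₁ Y₂ ∘L T).le_opNorm x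

theorem apply_symm_add_abs_le (he : ∀ y : Y, ‖y‖ = N ‖(e y).1‖ ‖(e y).2‖)
    {g : StrongDual ℝ Y} (hg : ‖g‖ ≤ 1) {u : Y₁} (hu : ‖u‖ = 1) (w : Y₁) (z : Y₂) :
    g (e.symm (u, 0)) * ‖w‖ + |g (e.symm (0, z))| ≤ N ‖w‖ ‖z‖ := by
  have key : ∀ z : Y₂, g (e.symm (u, 0)) * ‖w‖ + g (e.symm (0, z)) ≤ N ‖w‖ ‖z‖ := by
    intro z
    have hsplit : e.symm (‖w‖ • u, z) = ‖w‖ • e.symm (u, 0) + e.symm (0, z) := by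
      rw [← map_smul, ← map_add, Prod.smul_mk, smul_zero, Prod.mk_add_mk, add_zero, zero_add]
    calc g (e.symm (u, 0)) * ‖w‖ + g (e.symm (0, z)) = g (e.symm (‖w‖ • u, z)) := by
          rw [hsplit, map_add, map_smul, smul_eq_mul, mul_comm]
      _ ≤ ‖e.symm (‖w‖ • u, z)‖ :=
          (le_abs_self _).trans ((g.le_of_opNorm_le hg _).trans_eq (one_mul _))
      _ = N ‖w‖ ‖z‖ := by rw [norm_symm_apply he, norm_smul, hu, norm_norm, mul_one]
  have hpair : ((0 : Y₁), -z) = -(0, z) := by rw [Prod.neg_mk, neg_zero]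
  have hneg := key (-z)
  rw [hpair, map_neg, map_neg, norm_neg] at hneg
  cases abs_cases (g (e.symm (0, z))) <;> linarith [key z]

theorem apply_eq_of_fst_eq_smul {g : StrongDual ℝ Y} {u : Y₁} {y : Y}
    (hy : (e y).1 = ‖(e y).1‖ • u) :
    g y = g (e.symm (u, 0)) * ‖(e y).1‖ + g (e.symm (0, (e y).2)) := by
  conv_lhs => rw [← e.symm_apply_apply y, ← Prod.fst_add_snd (e y), hy]
  rw [← Prod.smul_mk_zero, map_add, map_smul, map_add, map_smul, smul_eq_mul, mul_comm]

noncomputable def twistedFst (e : Y ≃L[ℝ] Y₁ × Y₂) (g : StrongDual ℝ Y) (u : Y₁) :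
    Y →L[ℝ] Y₁ :=
  fst ℝ Y₁ Y₂ ∘L e + (g (e.symm (u, 0)))⁻¹ •
    (g ∘L (e.symm : Y₁ × Y₂ →L[ℝ] Y) ∘L inr ℝ Y₁ Y₂ ∘L snd ℝ Y₁ Y₂ ∘L e).smulRight u

theorem twistedFst_apply (g : StrongDual ℝ Y) (u : Y₁) (y : Y) :
    twistedFst e g u y = (e y).1 + ((g (e.symm (u, 0)))⁻¹ * g (e.symm (0, (e y).2))) • u := by
  simp [twistedFst, smul_smul]

theorem twistedFst_symm_inl (g : StrongDual ℝ Y) (u : Y₁) (w : Y₁) :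
    twistedFst e g u (e.symm (w, 0)) = w := by
  simp [twistedFst_apply, Prod.mk_zero_zero]

theorem norm_twistedFst_le (he : ∀ y : Y, ‖y‖ = N ‖(e y).1‖ ‖(e y).2‖)
    {g : StrongDual ℝ Y} (hg : ‖g‖ ≤ 1) {u : Y₁} (hu : ‖u‖ = 1)
    (hα : 0 < g (e.symm (u, 0))) : ‖twistedFst e g u‖ ≤ (g (e.symm (u, 0)))⁻¹ := by
  set α := g (e.symm (u, 0))
  refine opNorm_le_bound _ (inv_nonneg.mpr hα.le) fun y => ?_
  calc ‖twistedFst e g u y‖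
      ≤ ‖(e y).1‖ + α⁻¹ * |g (e.symm (0, (e y).2))| := by
        rw [twistedFst_apply]
        refine (norm_add_le _ _).trans_eq ?_
        rw [norm_smul, hu, mul_one, Real.norm_eq_abs, abs_mul, abs_inv, abs_of_pos hα]
    _ = α⁻¹ * (α * ‖(e y).1‖ + |g (e.symm (0, (e y).2))|) := by field_simp
    _ ≤ α⁻¹ * ‖y‖ := by
        rw [he y]
        gcongr
        exact apply_symm_add_abs_le he hg hu _ _

theorem norm_twistedFst_apply {g : StrongDual ℝ Y} {u : Y₁} (hu : ‖u‖ = 1)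
    (hα : 0 < g (e.symm (u, 0))) {y : Y} (hgy : g y = ‖y‖) (hy : (e y).1 = ‖(e y).1‖ • u) :
    ‖twistedFst e g u y‖ = (g (e.symm (u, 0)))⁻¹ * ‖y‖ := by
  have hcoef : ‖(e y).1‖ + (g (e.symm (u, 0)))⁻¹ * g (e.symm (0, (e y).2))
      = (g (e.symm (u, 0)))⁻¹ * ‖y‖ := by
    rw [← hgy, apply_eq_of_fst_eq_smul hy]
    field_simp
  rw [twistedFst_apply, hy, ← add_smul, hcoef, norm_smul, hu, mul_one,
    Real.norm_of_nonneg (by positivity)]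

theorem exists_isCompactOperator_mem_NA_norm_sub_lt (hN : IsAbsoluteNorm N)
    (he : ∀ y : Y, ‖y‖ = N ‖(e y).1‖ ‖(e y).2‖) {X : Type*} [NormedAddCommGroup X]
    [NormedSpace ℝ X] {T : X →L[ℝ] Y₁} {S : X →L[ℝ] Y} (hS : IsCompactOperator S)
    (hSNA : S ∈ NA X Y) {δ : ℝ} (hST : ‖S - (e.symm : Y₁ × Y₂ →L[ℝ] Y) ∘L inl ℝ Y₁ Y₂ ∘L T‖ < δ)
    (hδT : 4 * δ ≤ ‖T‖) :
    ∃ G : X →L[ℝ] Y₁, IsCompactOperator G ∧ G ∈ NA X Y₁ ∧ ‖G - T‖ < 2 * δ := by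
  set R := S - (e.symm : Y₁ × Y₂ →L[ℝ] Y) ∘L inl ℝ Y₁ Y₂ ∘L T
  have hδ : 0 < δ := (norm_nonneg R).trans_lt hST
  obtain ⟨x₀, hx₀, hSx₀⟩ := hSNA
  set y₀ := S x₀
  have hsnd : ‖(e y₀).2‖ < δ := by
    have h : (e y₀).2 = (e (R x₀)).2 := by simp [R, y₀]
    rw [h]
    exact (norm_snd_le hN he _).trans_lt ((R.le_opNorm_of_le hx₀.le).trans_lt (by simpa))
  have hnormS : 3 * δ < ‖S‖ := by
    have h := norm_sub_norm_le ((e.symm : Y₁ × Y₂ →L[ℝ] Y) ∘L inl ℝ Y₁ Y₂ ∘L T) S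
    rw [norm_comp_symm_inl hN he, norm_sub_rev] at h
    linarith
  set a := ‖(e y₀).1‖
  have ha : ‖S‖ - δ < a := by linarith [norm_le_norm_fst_add_norm_snd hN he y₀]
  obtain ⟨u, hu, hy₀⟩ : ∃ u : Y₁, ‖u‖ = 1 ∧ (e y₀).1 = a • u :=
    ⟨a⁻¹ • (e y₀).1, by rw [norm_smul, norm_inv, norm_norm, inv_mul_cancel₀ (by linarith)],
      by rw [smul_inv_smul₀ (by linarith)]⟩
  obtain ⟨g, hg, hgy₀⟩ := exists_dual_vector'' ℝ y₀
  replace hgy₀ : g y₀ = ‖y₀‖ := hgy₀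
  set α := g (e.symm (u, 0))
  have hαa : ‖S‖ - δ < α * a := by
    have hsplit : g y₀ = α * a + g (e.symm (0, (e y₀).2)) := apply_eq_of_fst_eq_smul hy₀
    have hγ : |g (e.symm (0, (e y₀).2))| ≤ ‖(e y₀).2‖ :=
      (g.le_of_opNorm_le hg _).trans_eq (by rw [one_mul, norm_symm_inr hN he])
    linarith [le_abs_self (g (e.symm (0, (e y₀).2)))]
  have hα : 2 / 3 < α := by nlinarith [norm_fst_le hN he y₀]
  have hα₀ : 0 < α := by linarith
  refine ⟨twistedFst e g u ∘L S, hS.clm_comp (twistedFst e g u), comp_mem_NA hx₀ hSx₀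
    (norm_twistedFst_le he hg hu hα₀) (norm_twistedFst_apply hu hα₀ hgy₀ hy₀), ?_⟩
  have hR : twistedFst e g u ∘L S - T = twistedFst e g u ∘L R := by
    ext x
    simp [R, twistedFst_symm_inl]
  calc ‖twistedFst e g u ∘L S - T‖ ≤ ‖twistedFst e g u‖ * ‖R‖ := hR ▸ opNorm_comp_le _ _
    _ ≤ α⁻¹ * ‖R‖ := by gcongr; exact norm_twistedFst_le he hg hu hα₀
    _ < 2 * δ := by
      rw [inv_mul_lt_iff₀ hα₀]
      nlinarith [norm_nonneg R]

end AbsoluteSum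

theorem na_compact_dense_absolute_summand_range_general (X Y Y₁ Y₂ : Type*)
    [NormedAddCommGroup X] [NormedSpace ℝ X]
    [NormedAddCommGroup Y] [NormedSpace ℝ Y]
    [NormedAddCommGroup Y₁] [NormedSpace ℝ Y₁]
    [NormedAddCommGroup Y₂] [NormedSpace ℝ Y₂]
    (N : ℝ → ℝ → ℝ) (hN : IsAbsoluteNorm N)
    (e : Y ≃L[ℝ] Y₁ × Y₂) (he : ∀ y : Y, ‖y‖ = N ‖(e y).1‖ ‖(e y).2‖)
    (h : ∀ T : X →L[ℝ] Y, IsCompactOperator (⇑T) → ∀ ε : ℝ, 0 < ε →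
      ∃ S : X →L[ℝ] Y, IsCompactOperator (⇑S) ∧ S ∈ NA X Y ∧ ‖S - T‖ < ε) :
    ∀ T : X →L[ℝ] Y₁, IsCompactOperator (⇑T) → ∀ ε : ℝ, 0 < ε →
      ∃ S : X →L[ℝ] Y₁, IsCompactOperator (⇑S) ∧ S ∈ NA X Y₁ ∧ ‖S - T‖ < ε := by
  intro T hT ε hε
  rcases lt_or_ge ‖T‖ ε with hTε | hTε
  · obtain ⟨-, -, ⟨x₀, hx₀, -⟩, -⟩ := h 0 isCompactOperator_zero 1 one_pos
    exact ⟨0, isCompactOperator_zero, ⟨x₀, hx₀, by simp⟩, by simpa using hTε⟩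
  · set i₁ : Y₁ →L[ℝ] Y := (e.symm : Y₁ × Y₂ →L[ℝ] Y) ∘L ContinuousLinearMap.inl ℝ Y₁ Y₂
    obtain ⟨S, hS, hSNA, hST⟩ :=
      h (i₁ ∘L T) (hT.clm_comp i₁) (min (ε / 2) (‖T‖ / 4)) (lt_min (by linarith) (by linarith))
    obtain ⟨G, hG, hGNA, hGT⟩ := AbsoluteSum.exists_isCompactOperator_mem_NA_norm_sub_lt hN he
      hS hSNA hST (by linarith [min_le_right (ε / 2) (‖T‖ / 4)])
    exact ⟨G, hG, hGNA, hGT.trans_le (by linarith [min_le_left (ε / 2) (‖T‖ / 4)])⟩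

theorem na_compact_dense_absolute_summand_range (X Y Y₁ Y₂ : Type*)
    [NormedAddCommGroup X] [NormedSpace ℝ X] [CompleteSpace X]
    [NormedAddCommGroup Y] [NormedSpace ℝ Y] [CompleteSpace Y]
    [NormedAddCommGroup Y₁] [NormedSpace ℝ Y₁] [CompleteSpace Y₁]
    [NormedAddCommGroup Y₂] [NormedSpace ℝ Y₂] [CompleteSpace Y₂]
    (N : ℝ → ℝ → ℝ) (hN : IsAbsoluteNorm N)
    (e : Y ≃L[ℝ] Y₁ × Y₂) (he : ∀ y : Y, ‖y‖ = N ‖(e y).1‖ ‖(e y).2‖)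
    (h : ∀ T : X →L[ℝ] Y, IsCompactOperator (⇑T) → ∀ ε : ℝ, 0 < ε →
      ∃ S : X →L[ℝ] Y, IsCompactOperator (⇑S) ∧ S ∈ NA X Y ∧ ‖S - T‖ < ε) :
    ∀ T : X →L[ℝ] Y₁, IsCompactOperator (⇑T) → ∀ ε : ℝ, 0 < ε →
      ∃ S : X →L[ℝ] Y₁, IsCompactOperator (⇑S) ∧ S ∈ NA X Y₁ ∧ ‖S - T‖ < ε :=
  na_compact_dense_absolute_summand_range_general X Y Y₁ Y₂ N hN e he h
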